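/- arXiv:1209.6589 — 2 statements merged into one kernel-verified Lean document; each statement's English description precedes it below -/
import Mathlib

section
/- Suppose the linear equation x_{m+1} = A_m x_m admits a general dichotomy with bounds (a_{m,n}) and (b_{m,n}), the maps f_m are Lipschitz with f_m(0)=0, α < +∞, and 2α + max{2β, √β} < 1. Then for each φ ∈ 𝒳 and each n ∈ ℕ there exists a unique sequence x^φ = (x^φ_m)_{m≥n} ∈ ℬ_n satisfying x^φ_m(ξ) = 𝒜_{m,n}ξ + Σ_{k=n}^{m−1} 𝒜_{m,k+1} P_{k+1} f_k(x^φ_k(ξ) + φ_k(x^φ_k(ξ))) for all m ≥ n and all ξ ∈ E_n; in particular x^φ_n(ξ) = ξ for every ξ ∈ E_n. -/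
/-!
Because the sum defining `x_m` only involves `x_k` for `k < m`, the equation is the
variation-of-constants form of the forward recursion
`x_{m+1} = A_m x_m + P_{m+1} f_m(x_m + φ_m(x_m))`, `x_n = ξ`.
Hence it has exactly one solution, obtained by running this recursion, and the invariance of the
splitting keeps `x_m` in `E_m`. The growth bound `‖x_m(ξ)‖ ≤ (1 - 2α)⁻¹ a_{m,n} ‖ξ‖` follows by
strong induction on `m`: each `f_k(x_k + φ_k(x_k))` has norm at most `2 Lip(f_k) ‖x_k‖`, and the
definition of `α` absorbs the resulting sum.
-/

/-- `calA A m n` is the linear evolution operator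
`𝒜_{m,n} = A_{m-1} ∘ ⋯ ∘ A_n` (and the identity if `m ≤ n`). -/
def calA {X : Type*} [NormedAddCommGroup X] [NormedSpace ℝ X]
    (A : ℕ → X →L[ℝ] X) : ℕ → ℕ → X →L[ℝ] X
  | 0, _ => ContinuousLinearMap.id ℝ X
  | m + 1, n => if m + 1 ≤ n then ContinuousLinearMap.id ℝ X else (A m).comp (calA A m n)

open Finset

section Evolution

variable {X : Type*} [NormedAddCommGroup X] [NormedSpace ℝ X] (A : ℕ → X →L[ℝ] X)

lemma calA_self (n : ℕ) : calA A n n = ContinuousLinearMap.id ℝ X := by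
  cases n <;> simp [calA]

lemma calA_succ {m k : ℕ} (hk : k ≤ m) : calA A (m + 1) k = (A m).comp (calA A m k) := by
  simp [calA, show ¬m + 1 ≤ k by omega]

/-- Its values at indices `m < n` are the placeholder `ξ`. -/
def forwardSeq (g : ℕ → X → X) (n : ℕ) (ξ : X) : ℕ → X
  | 0 => ξ
  | m + 1 => if m + 1 ≤ n then ξ else A m (forwardSeq g n ξ m) + g m (forwardSeq g n ξ m)

variable (g : ℕ → X → X) (n : ℕ) (ξ : X)

lemma forwardSeq_self : forwardSeq A g n ξ n = ξ := by
  cases n <;> simp [forwardSeq]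

lemma forwardSeq_succ {m : ℕ} (hm : n ≤ m) :
    forwardSeq A g n ξ (m + 1) = A m (forwardSeq A g n ξ m) + g m (forwardSeq A g n ξ m) := by
  simp [forwardSeq, show ¬m + 1 ≤ n by omega]

lemma forwardSeq_eq_calA_add_sum {m : ℕ} (hm : n ≤ m) :
    forwardSeq A g n ξ m =
      calA A m n ξ + ∑ k ∈ Ico n m, calA A m (k + 1) (g k (forwardSeq A g n ξ k)) := by
  induction m, hm using Nat.le_induction with
  | base => simp [forwardSeq_self, calA_self]
  | succ m hm ih =>
    have hsum : ∑ k ∈ Ico n m, calA A (m + 1) (k + 1) (g k (forwardSeq A g n ξ k)) =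
        A m (∑ k ∈ Ico n m, calA A m (k + 1) (g k (forwardSeq A g n ξ k))) := by
      rw [map_sum]
      exact sum_congr rfl fun k hk => by rw [calA_succ A (mem_Ico.mp hk).2]; rfl
    rw [forwardSeq_succ A g n ξ hm, sum_Ico_succ_top hm, hsum, calA_succ A hm, calA_self, ih,
      map_add, add_assoc]
    rfl

lemma proj_forwardSeq {P : ℕ → X →L[ℝ] X} (hPA : ∀ m z, P (m + 1) (A m z) = A m (P m z))
    (hPg : ∀ m z, P (m + 1) (g m z) = g m z) (hξ : P n ξ = ξ) {m : ℕ} (hm : n ≤ m) :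
    P m (forwardSeq A g n ξ m) = forwardSeq A g n ξ m := by
  induction m, hm using Nat.le_induction with
  | base => rw [forwardSeq_self, hξ]
  | succ m hm ih => rw [forwardSeq_succ A g n ξ hm, map_add, hPA, ih, hPg]

end Evolution

lemma norm_apply_add_le_two_mul {Y Z : Type*} [SeminormedAddCommGroup Y]
    [SeminormedAddCommGroup Z] {g : Y → Z} {L : ℝ} (hL : 0 ≤ L) (hg0 : g 0 = 0)
    (hg : ∀ u v, ‖g u - g v‖ ≤ L * ‖u - v‖) {z w : Y} (hw : ‖w‖ ≤ ‖z‖) :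
    ‖g (z + w)‖ ≤ 2 * L * ‖z‖ :=
  calc ‖g (z + w)‖ ≤ L * ‖z + w‖ := by simpa [hg0] using hg (z + w) 0
    _ ≤ L * (2 * ‖z‖) := by gcongr; linarith [norm_add_le z w]
    _ = 2 * L * ‖z‖ := by ring

lemma sum_le_mul_of_mem_upperBounds {a : ℕ → ℕ → ℝ} {L : ℕ → ℝ} {α : ℝ}
    (ha : ∀ m n : ℕ, n ≤ m → 0 < a m n) (hL0 : ∀ k, 0 ≤ L k)
    (hα : α ∈ upperBounds {r : ℝ | ∃ m n : ℕ, n < m ∧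
      r = (∑ k ∈ Ico n m, a m (k + 1) * (a k n * L k)) / a m n})
    (n m : ℕ) (hm : n ≤ m) :
    ∑ k ∈ Ico n m, a m (k + 1) * (a k n * L k) ≤ α * a m n := by
  rcases hm.eq_or_lt with rfl | hlt
  · have hα0 : 0 ≤ α := by
      refine le_trans (div_nonneg (sum_nonneg fun k hk => ?_) (ha 1 0 zero_le_one).le)
        (hα ⟨1, 0, zero_lt_one, rfl⟩)
      have hk := mem_Ico.mp hk
      exact mul_nonneg (ha _ _ hk.2).le (mul_nonneg (ha _ _ hk.1).le (hL0 k))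
    simpa using mul_nonneg hα0 (ha n n le_rfl).le
  · exact (div_le_iff₀ (ha m n hm)).mp (hα ⟨m, n, hlt, rfl⟩)

section Xphi

variable {X : Type*} [NormedAddCommGroup X] [NormedSpace ℝ X]

lemma apply_eq_self_of_mem_range {p : X →L[ℝ] X} (hp : p.comp p = p)
    (z : LinearMap.range (p : X →ₗ[ℝ] X)) : p z = z :=
  (LinearMap.IsIdempotentElem.mem_range_iff
    (ContinuousLinearMap.IsIdempotentElem.toLinearMap hp)).mp z.2

variable (A P : ℕ → X →L[ℝ] X) (f : ℕ → X → X)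
  (φ : ∀ n : ℕ, LinearMap.range (P n : X →ₗ[ℝ] X) → LinearMap.ker (P n : X →ₗ[ℝ] X))

/-- `φ k` only lives on `E k = range (P k)`, so it is applied to `P k z`. -/
def xphiStep (k : ℕ) (z : X) : X :=
  P (k + 1) (f k (P k z + φ k ⟨P k z, LinearMap.mem_range_self _ z⟩))

def xphi (n m : ℕ) (ξ : LinearMap.range (P n : X →ₗ[ℝ] X)) : LinearMap.range (P m : X →ₗ[ℝ] X) :=
  ⟨P m (forwardSeq A (xphiStep P f φ) n ξ m), LinearMap.mem_range_self _ _⟩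

def IsXphiSolution (n : ℕ)
    (x : ∀ m : ℕ, LinearMap.range (P n : X →ₗ[ℝ] X) → LinearMap.range (P m : X →ₗ[ℝ] X)) :
    Prop :=
  ∀ m : ℕ, n ≤ m → ∀ ξ : LinearMap.range (P n : X →ₗ[ℝ] X),
    (x m ξ : X) = calA A m n (ξ : X) +
      ∑ k ∈ Ico n m, calA A m (k + 1) (P (k + 1) (f k ((x k ξ : X) + (φ k (x k ξ) : X))))

variable {A P f φ} {n : ℕ}

lemma isXphiSolution_xphi (hproj : ∀ n, (P n).comp (P n) = P n)
    (hS1 : ∀ m n : ℕ, n ≤ m → (P m).comp (calA A m n) = (calA A m n).comp (P n)) :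
    IsXphiSolution A P f φ n (xphi A P f φ n) := by
  have hPA : ∀ m z, P (m + 1) (A m z) = A m (P m z) := fun m z => by
    simpa [calA_succ A le_rfl, calA_self] using congr($(hS1 (m + 1) m m.le_succ) z)
  have hPstep : ∀ k z, P (k + 1) (xphiStep P f φ k z) = xphiStep P f φ k z := fun k _ =>
    apply_eq_self_of_mem_range (hproj (k + 1)) ⟨_, LinearMap.mem_range_self _ _⟩
  intro m hm ξ
  show P m _ = _
  rw [proj_forwardSeq A _ n _ hPA hPstep (apply_eq_self_of_mem_range (hproj n) ξ) hm,
    forwardSeq_eq_calA_add_sum A _ n _ hm]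
  rfl

variable {x y : ∀ m : ℕ, LinearMap.range (P n : X →ₗ[ℝ] X) → LinearMap.range (P m : X →ₗ[ℝ] X)}

lemma IsXphiSolution.eq (hx : IsXphiSolution A P f φ n x) (hy : IsXphiSolution A P f φ n y)
    {m : ℕ} (hm : n ≤ m) (ξ : LinearMap.range (P n : X →ₗ[ℝ] X)) : y m ξ = x m ξ := by
  induction m using Nat.strong_induction_on with
  | _ m ih =>
    apply Subtype.ext
    rw [hy m hm ξ, hx m hm ξ]
    refine congrArg _ (sum_congr rfl fun k hk => ?_)
    rw [ih k (mem_Ico.mp hk).2 (mem_Ico.mp hk).1]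

lemma IsXphiSolution.apply_self (hx : IsXphiSolution A P f φ n x)
    (ξ : LinearMap.range (P n : X →ₗ[ℝ] X)) : x n ξ = ξ :=
  Subtype.ext <| by simpa [calA_self] using hx n le_rfl ξ

lemma IsXphiSolution.norm_le {a : ℕ → ℕ → ℝ} {L : ℕ → ℝ} {α : ℝ}
    (hx : IsXphiSolution A P f φ n x) (hproj : ∀ n, (P n).comp (P n) = P n)
    (hD1 : ∀ m n : ℕ, n ≤ m → ‖(calA A m n).comp (P n)‖ ≤ a m n)
    (hL0 : ∀ k, 0 ≤ L k) (hf0 : ∀ k, f k 0 = 0)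
    (hLip : ∀ (k : ℕ) (u v : X), ‖f k u - f k v‖ ≤ L k * ‖u - v‖)
    (hφ0 : ∀ n, φ n 0 = 0)
    (hφ : ∀ (n : ℕ) (ξ ξ' : LinearMap.range (P n : X →ₗ[ℝ] X)),
      ‖(φ n ξ : X) - (φ n ξ' : X)‖ ≤ ‖(ξ : X) - (ξ' : X)‖)
    (hsum : ∀ m, n ≤ m → ∑ k ∈ Ico n m, a m (k + 1) * (a k n * L k) ≤ α * a m n)
    (h2α : 2 * α < 1) {m : ℕ} (hm : n ≤ m) (ξ : LinearMap.range (P n : X →ₗ[ℝ] X)) :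
    ‖(x m ξ : X)‖ ≤ (1 - 2 * α)⁻¹ * (a m n * ‖(ξ : X)‖) := by
  set C := (1 - 2 * α)⁻¹
  have hC0 : 0 ≤ C := inv_nonneg.mpr (by linarith)
  have hC : 1 + 2 * α * C = C := by
    have : (1 - 2 * α) * C = 1 := mul_inv_cancel₀ (by linarith)
    linarith
  have hlin : ∀ m k, k ≤ m → ∀ z, ‖calA A m k (P k z)‖ ≤ a m k * ‖z‖ := fun m k hk =>
    ((calA A m k).comp (P k)).le_of_opNorm_le (hD1 m k hk)
  induction m using Nat.strong_induction_on with
  | _ m ih =>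
    have hterm : ∀ k ∈ Ico n m,
        ‖calA A m (k + 1) (P (k + 1) (f k ((x k ξ : X) + (φ k (x k ξ) : X))))‖ ≤
          a m (k + 1) * (a k n * L k) * (2 * C * ‖(ξ : X)‖) := by
      intro k hk
      obtain ⟨hnk, hkm⟩ := mem_Ico.mp hk
      have hφk : ‖(φ k (x k ξ) : X)‖ ≤ ‖(x k ξ : X)‖ := by simpa [hφ0] using hφ k (x k ξ) 0
      have ha0 : 0 ≤ a m (k + 1) := (norm_nonneg _).trans (hD1 m (k + 1) hkm)
      calc _ ≤ a m (k + 1) * ‖f k ((x k ξ : X) + (φ k (x k ξ) : X))‖ := hlin m (k + 1) hkm _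
        _ ≤ a m (k + 1) * (2 * L k * (C * (a k n * ‖(ξ : X)‖))) := by
          gcongr
          exact (norm_apply_add_le_two_mul (hL0 k) (hf0 k) (hLip k) hφk).trans
            (mul_le_mul_of_nonneg_left (ih k hkm hnk) (mul_nonneg zero_le_two (hL0 k)))
        _ = _ := by ring
    have hlead : ‖calA A m n (ξ : X)‖ ≤ a m n * ‖(ξ : X)‖ := by
      simpa [apply_eq_self_of_mem_range (hproj n) ξ] using hlin m n hm ξ
    calc ‖(x m ξ : X)‖
        ≤ a m n * ‖(ξ : X)‖ + ∑ k ∈ Ico n m, a m (k + 1) * (a k n * L k) * (2 * C * ‖(ξ : X)‖) := by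
          rw [hx m hm ξ]
          exact (norm_add_le _ _).trans
            (add_le_add hlead ((norm_sum_le _ _).trans (sum_le_sum hterm)))
      _ ≤ a m n * ‖(ξ : X)‖ + α * a m n * (2 * C * ‖(ξ : X)‖) := by
          rw [← sum_mul]
          gcongr
          exact hsum m hm
      _ = C * (a m n * ‖(ξ : X)‖) := by linear_combination (a m n * ‖(ξ : X)‖) * hC

end Xphi

theorem exists_unique_xphi_general
    {X : Type*} [NormedAddCommGroup X] [NormedSpace ℝ X]
    (A P : ℕ → X →L[ℝ] X) (a : ℕ → ℕ → ℝ)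
    -- the bounds are positive
    (ha : ∀ m n : ℕ, n ≤ m → 0 < a m n)
    -- the `P n` are bounded projections
    (hproj : ∀ n, (P n).comp (P n) = P n)
    -- (S1) : `P m ∘ 𝒜_{m,n} = 𝒜_{m,n} ∘ P n`
    (hS1 : ∀ m n : ℕ, n ≤ m → (P m).comp (calA A m n) = (calA A m n).comp (P n))
    -- (D1) : `‖𝒜_{m,n} P n‖ ≤ a m n`
    (hD1 : ∀ m n : ℕ, n ≤ m → ‖(calA A m n).comp (P n)‖ ≤ a m n)
    -- the perturbations `f k` vanish at `0` and are Lipschitz with constant `L k`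
    (f : ℕ → X → X) (L : ℕ → ℝ) (hL0 : ∀ k, 0 ≤ L k) (hf0 : ∀ k, f k 0 = 0)
    (hLip : ∀ (k : ℕ) (u v : X), ‖f k u - f k v‖ ≤ L k * ‖u - v‖)
    -- `α = sup_{m>n} (1/a_{m,n}) ∑_{k=n}^{m-1} a_{m,k+1} a_{k,n} Lip(f k) < ∞`
    (α : ℝ)
    (hα : IsLUB {r : ℝ | ∃ m n : ℕ, n < m ∧
      r = (∑ k ∈ Finset.Ico n m, a m (k + 1) * (a k n * L k)) / a m n} α)
    -- `β = sup_n ∑_{k=n}^{∞} b_{k+1,n} a_{k,n} Lip(f k) < ∞`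
    (β : ℝ)
    -- `2α + max {2β, √β} < 1`
    (hcond : 2 * α + max (2 * β) (Real.sqrt β) < 1)
    (φ : ∀ n : ℕ, LinearMap.range (P n : X →ₗ[ℝ] X) → LinearMap.ker (P n : X →ₗ[ℝ] X))
    (hφ : ((∀ n, φ n 0 = 0) ∧
      ∀ (n : ℕ) (ξ ξ' : LinearMap.range (P n : X →ₗ[ℝ] X)),
        ‖(φ n ξ : X) - (φ n ξ' : X)‖ ≤ ‖(ξ : X) - (ξ' : X)‖))
    (n : ℕ) :
    ∃ x : ∀ m : ℕ, LinearMap.range (P n : X →ₗ[ℝ] X) → LinearMap.range (P m : X →ₗ[ℝ] X),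
      -- `x ∈ ℬ_n` and `x` satisfies the fixed point equation for all `m ≥ n`
      ((∀ m : ℕ, n ≤ m → x m 0 = 0) ∧
      (∃ C : ℝ, ∀ m : ℕ, n ≤ m → ∀ ξ : LinearMap.range (P n : X →ₗ[ℝ] X),
        ‖(x m ξ : X)‖ ≤ C * (a m n * ‖(ξ : X)‖)) ∧
      (∀ m : ℕ, n ≤ m → ∀ ξ : LinearMap.range (P n : X →ₗ[ℝ] X),
        (x m ξ : X) = calA A m n (ξ : X) +
          ∑ k ∈ Finset.Ico n m,
            calA A m (k + 1) (P (k + 1) (f k ((x k ξ : X) + (φ k (x k ξ) : X)))))) ∧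
      -- uniqueness of the sequence `(x_m)_{m ≥ n}`
      (∀ y : ∀ m : ℕ, LinearMap.range (P n : X →ₗ[ℝ] X) → LinearMap.range (P m : X →ₗ[ℝ] X),
        ((∀ m : ℕ, n ≤ m → y m 0 = 0) ∧
        (∃ C : ℝ, ∀ m : ℕ, n ≤ m → ∀ ξ : LinearMap.range (P n : X →ₗ[ℝ] X),
          ‖(y m ξ : X)‖ ≤ C * (a m n * ‖(ξ : X)‖)) ∧
        (∀ m : ℕ, n ≤ m → ∀ ξ : LinearMap.range (P n : X →ₗ[ℝ] X),
          (y m ξ : X) = calA A m n (ξ : X) +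
            ∑ k ∈ Finset.Ico n m,
              calA A m (k + 1) (P (k + 1) (f k ((y k ξ : X) + (φ k (y k ξ) : X)))))) →
        ∀ m : ℕ, n ≤ m → ∀ ξ : LinearMap.range (P n : X →ₗ[ℝ] X), y m ξ = x m ξ) ∧
      -- in particular `x_n(ξ) = ξ`
      (∀ ξ : LinearMap.range (P n : X →ₗ[ℝ] X), x n ξ = ξ) := by
  have h2α : 2 * α < 1 := by linarith [le_max_right (2 * β) (Real.sqrt β), Real.sqrt_nonneg β]
  have hx := isXphiSolution_xphi (f := f) (φ := φ) (n := n) hproj hS1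
  have hbound := fun m (hm : n ≤ m) ξ => hx.norm_le hproj hD1 hL0 hf0 hLip hφ.1 hφ.2
    (sum_le_mul_of_mem_upperBounds ha hL0 hα.1 n) h2α hm ξ
  refine ⟨xphi A P f φ n, ⟨fun m hm => ?_, ⟨_, hbound⟩, hx⟩,
    fun y ⟨_, _, hy⟩ m hm ξ => hx.eq hy hm ξ, hx.apply_self⟩
  simpa using hbound m hm 0

/-- Lemma 3.1, existence and uniqueness of `x^φ ∈ ℬ_n`. -/
theorem exists_unique_xphi
    {X : Type*} [NormedAddCommGroup X] [NormedSpace ℝ X] [CompleteSpace X]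
    (A P : ℕ → X →L[ℝ] X) (B : ℕ → ℕ → X →L[ℝ] X) (a b : ℕ → ℕ → ℝ)
    -- the bounds are positive
    (ha : ∀ m n : ℕ, n ≤ m → 0 < a m n) (hb : ∀ m n : ℕ, n ≤ m → 0 < b m n)
    -- the `P n` are bounded projections
    (hproj : ∀ n, (P n).comp (P n) = P n)
    -- (S1) : `P m ∘ 𝒜_{m,n} = 𝒜_{m,n} ∘ P n`
    (hS1 : ∀ m n : ℕ, n ≤ m → (P m).comp (calA A m n) = (calA A m n).comp (P n))
    -- (S2)/(S3) : `B m n` is the operator `(𝒜_{m,n}|_{F n})⁻¹ ∘ Q m`, where `Q m = Id - P m`;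
    -- its existence encodes that `𝒜_{m,n}` maps `F n = ker (P n)` bijectively onto `F m`
    (hB1 : ∀ m n : ℕ, n ≤ m → ∀ x : X, calA A m n (B m n x) = x - P m x)
    (hB2 : ∀ m n : ℕ, n ≤ m → ∀ x : X, B m n (calA A m n x) = x - P n x)
    (hBF : ∀ m n : ℕ, n ≤ m → ∀ x : X, P n (B m n x) = 0)
    -- (D1) : `‖𝒜_{m,n} P n‖ ≤ a m n`
    (hD1 : ∀ m n : ℕ, n ≤ m → ‖(calA A m n).comp (P n)‖ ≤ a m n)
    -- (D2) : `‖(𝒜_{m,n}|_{F n})⁻¹ Q m‖ ≤ b m n`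
    (hD2 : ∀ m n : ℕ, n ≤ m → ‖B m n‖ ≤ b m n)
    -- the perturbations `f k` vanish at `0` and are Lipschitz with constant `L k`
    (f : ℕ → X → X) (L : ℕ → ℝ) (hL0 : ∀ k, 0 ≤ L k) (hf0 : ∀ k, f k 0 = 0)
    (hLip : ∀ (k : ℕ) (u v : X), ‖f k u - f k v‖ ≤ L k * ‖u - v‖)
    -- `α = sup_{m>n} (1/a_{m,n}) ∑_{k=n}^{m-1} a_{m,k+1} a_{k,n} Lip(f k) < ∞`
    (α : ℝ)
    (hα : IsLUB {r : ℝ | ∃ m n : ℕ, n < m ∧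
      r = (∑ k ∈ Finset.Ico n m, a m (k + 1) * (a k n * L k)) / a m n} α)
    -- `β = sup_n ∑_{k=n}^{∞} b_{k+1,n} a_{k,n} Lip(f k) < ∞`
    (β : ℝ)
    (hsum : ∀ n : ℕ, Summable fun j : ℕ => b (n + j + 1) n * (a (n + j) n * L (n + j)))
    (hβ : IsLUB {r : ℝ | ∃ n : ℕ,
      r = ∑' j : ℕ, b (n + j + 1) n * (a (n + j) n * L (n + j))} β)
    -- `2α + max {2β, √β} < 1`
    (hcond : 2 * α + max (2 * β) (Real.sqrt β) < 1)
    (φ : ∀ n : ℕ, LinearMap.range (P n : X →ₗ[ℝ] X) → LinearMap.ker (P n : X →ₗ[ℝ] X))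
    (hφ : ((∀ n, φ n 0 = 0) ∧
      ∀ (n : ℕ) (ξ ξ' : LinearMap.range (P n : X →ₗ[ℝ] X)),
        ‖(φ n ξ : X) - (φ n ξ' : X)‖ ≤ ‖(ξ : X) - (ξ' : X)‖))
    (n : ℕ) :
    ∃ x : ∀ m : ℕ, LinearMap.range (P n : X →ₗ[ℝ] X) → LinearMap.range (P m : X →ₗ[ℝ] X),
      -- `x ∈ ℬ_n` and `x` satisfies the fixed point equation for all `m ≥ n`
      ((∀ m : ℕ, n ≤ m → x m 0 = 0) ∧
      (∃ C : ℝ, ∀ m : ℕ, n ≤ m → ∀ ξ : LinearMap.range (P n : X →ₗ[ℝ] X),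
        ‖(x m ξ : X)‖ ≤ C * (a m n * ‖(ξ : X)‖)) ∧
      (∀ m : ℕ, n ≤ m → ∀ ξ : LinearMap.range (P n : X →ₗ[ℝ] X),
        (x m ξ : X) = calA A m n (ξ : X) +
          ∑ k ∈ Finset.Ico n m,
            calA A m (k + 1) (P (k + 1) (f k ((x k ξ : X) + (φ k (x k ξ) : X)))))) ∧
      -- uniqueness of the sequence `(x_m)_{m ≥ n}`
      (∀ y : ∀ m : ℕ, LinearMap.range (P n : X →ₗ[ℝ] X) → LinearMap.range (P m : X →ₗ[ℝ] X),
        ((∀ m : ℕ, n ≤ m → y m 0 = 0) ∧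
        (∃ C : ℝ, ∀ m : ℕ, n ≤ m → ∀ ξ : LinearMap.range (P n : X →ₗ[ℝ] X),
          ‖(y m ξ : X)‖ ≤ C * (a m n * ‖(ξ : X)‖)) ∧
        (∀ m : ℕ, n ≤ m → ∀ ξ : LinearMap.range (P n : X →ₗ[ℝ] X),
          (y m ξ : X) = calA A m n (ξ : X) +
            ∑ k ∈ Finset.Ico n m,
              calA A m (k + 1) (P (k + 1) (f k ((y k ξ : X) + (φ k (y k ξ) : X)))))) →
        ∀ m : ℕ, n ≤ m → ∀ ξ : LinearMap.range (P n : X →ₗ[ℝ] X), y m ξ = x m ξ) ∧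
      -- in particular `x_n(ξ) = ξ`
      (∀ ξ : LinearMap.range (P n : X →ₗ[ℝ] X), x n ξ = ξ) :=
  exists_unique_xphi_general A P a ha hproj hS1 hD1 f L hL0 hf0 hLip α hα β hcond φ hφ n
end

section
/- Under the hypotheses that x_{m+1} = A_m x_m admits a general dichotomy with bounds (a_{m,n}) and (b_{m,n}), that the f_m are Lipschitz with f_m(0)=0, that α < +∞ and 2α + max{2β, √β} < 1, the unique sequence x^φ ∈ ℬ_n associated to φ ∈ 𝒳 and n ∈ ℕ satisfies ‖x^φ‖_n ≤ 1/(1 − 2α). -/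
open Finset

/-- A discrete Gronwall inequality for Volterra sums whose kernel contracts the forcing term. -/
theorem le_div_one_sub_of_le_add_sum {n : ℕ} {r c : ℕ → ℝ} {w : ℕ → ℕ → ℝ} {γ : ℝ}
    (hγ : γ < 1) (hw : ∀ m k, k ∈ Ico n m → 0 ≤ w m k)
    (hc : ∀ m, n ≤ m → ∑ k ∈ Ico n m, w m k * c k ≤ γ * c m)
    (hr : ∀ m, n ≤ m → r m ≤ c m + ∑ k ∈ Ico n m, w m k * r k) :
    ∀ m, n ≤ m → r m ≤ c m / (1 - γ) := by
  have hγ' : 0 < 1 - γ := sub_pos.mpr hγ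
  intro m
  induction m using Nat.strong_induction_on with
  | _ m ih =>
    intro hnm
    have hrk : ∑ k ∈ Ico n m, w m k * r k ≤ ∑ k ∈ Ico n m, w m k * (c k / (1 - γ)) := by
      refine sum_le_sum fun k hk => mul_le_mul_of_nonneg_left ?_ (hw m k hk)
      obtain ⟨hnk, hkm⟩ := mem_Ico.mp hk
      exact ih k hkm hnk
    have hck : ∑ k ∈ Ico n m, w m k * (c k / (1 - γ)) ≤ γ * c m / (1 - γ) := by
      simp only [← mul_div_assoc, ← sum_div]
      exact div_le_div_of_nonneg_right (hc m hnm) hγ'.le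
    calc r m ≤ c m + γ * c m / (1 - γ) := by linarith [hr m hnm]
      _ = c m / (1 - γ) := by field_simp; ring

theorem norm_le_mul_norm_of_lipschitz {E F : Type*} [SeminormedAddCommGroup E]
    [SeminormedAddCommGroup F] {g : E → F} {K : ℝ} (hg0 : g 0 = 0)
    (hg : ∀ u v, ‖g u - g v‖ ≤ K * ‖u - v‖) (u : E) : ‖g u‖ ≤ K * ‖u‖ := by
  simpa [hg0] using hg u 0

theorem norm_apply_le_of_mem_range_of_idempotent {E F : Type*} [SeminormedAddCommGroup E]
    [NormedSpace ℝ E] [SeminormedAddCommGroup F] [NormedSpace ℝ F] {T : E →L[ℝ] F}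
    {P : E →L[ℝ] E} (hP : IsIdempotentElem P) {K : ℝ} (hT : ‖T.comp P‖ ≤ K) {u : E}
    (hu : u ∈ LinearMap.range (P : E →ₗ[ℝ] E)) : ‖T u‖ ≤ K * ‖u‖ := by
  have hPu : P u = u := (LinearMap.IsIdempotentElem.mem_range_iff
    (ContinuousLinearMap.IsIdempotentElem.toLinearMap hP)).mp hu
  simpa [hPu] using (T.comp P).le_of_opNorm_le hT u

theorem norm_apply_lipschitz_add_le {E F : Type*} [SeminormedAddCommGroup E] [NormedSpace ℝ E]
    [SeminormedAddCommGroup F] [NormedSpace ℝ F] {T : E →L[ℝ] F} {g : E → E} {K L : ℝ}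
    (hT : ‖T‖ ≤ K) (hL : 0 ≤ L) (hg0 : g 0 = 0) (hg : ∀ u v, ‖g u - g v‖ ≤ L * ‖u - v‖)
    {u v : E} (hv : ‖v‖ ≤ ‖u‖) : ‖T (g (u + v))‖ ≤ 2 * (K * L) * ‖u‖ := by
  have hK : 0 ≤ K := (norm_nonneg T).trans hT
  have huv : ‖u + v‖ ≤ 2 * ‖u‖ := by linarith [norm_add_le u v]
  calc ‖T (g (u + v))‖ ≤ K * (L * ‖u + v‖) := (T.le_of_opNorm_le hT _).trans <|
        mul_le_mul_of_nonneg_left (norm_le_mul_norm_of_lipschitz hg0 hg _) hK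
    _ ≤ K * (L * (2 * ‖u‖)) := by gcongr
    _ = 2 * (K * L) * ‖u‖ := by ring

theorem sum_le_mul_of_isLUB {a : ℕ → ℕ → ℝ} {L : ℕ → ℝ} {α : ℝ}
    (ha : ∀ m n : ℕ, n ≤ m → 0 < a m n) (hL0 : ∀ k, 0 ≤ L k)
    (hα : IsLUB {r : ℝ | ∃ m n : ℕ, n < m ∧
      r = (∑ k ∈ Ico n m, a m (k + 1) * (a k n * L k)) / a m n} α)
    {m n : ℕ} (hnm : n ≤ m) : ∑ k ∈ Ico n m, a m (k + 1) * (a k n * L k) ≤ α * a m n := by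
  have hmem : ∀ m n, n < m → (∑ k ∈ Ico n m, a m (k + 1) * (a k n * L k)) / a m n ≤ α :=
    fun m n h => hα.1 ⟨m, n, h, rfl⟩
  rcases hnm.eq_or_lt with rfl | hlt
  · have hsum : 0 ≤ ∑ k ∈ Ico n (n + 1), a (n + 1) (k + 1) * (a k n * L k) := by
      simp only [Nat.Ico_succ_singleton, sum_singleton]
      exact mul_nonneg (ha _ _ le_rfl).le (mul_nonneg (ha _ _ le_rfl).le (hL0 n))
    have hα0 : 0 ≤ α :=
      (div_nonneg hsum (ha _ _ n.le_succ).le).trans (hmem _ _ n.lt_succ_self)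
    simpa using mul_nonneg hα0 (ha n n le_rfl).le
  · exact (div_le_iff₀ (ha m n hnm)).mp (hmem m n hlt)

theorem norm_xphi_le_general
    {X : Type*} [NormedAddCommGroup X] [NormedSpace ℝ X]
    (A P : ℕ → X →L[ℝ] X) (a : ℕ → ℕ → ℝ)
    -- the bounds are positive
    (ha : ∀ m n : ℕ, n ≤ m → 0 < a m n)
    -- the `P n` are bounded projections
    (hproj : ∀ n, (P n).comp (P n) = P n)
    -- (D1) : `‖𝒜_{m,n} P n‖ ≤ a m n`
    (hD1 : ∀ m n : ℕ, n ≤ m → ‖(calA A m n).comp (P n)‖ ≤ a m n)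
    -- the perturbations `f k` vanish at `0` and are Lipschitz with constant `L k`
    (f : ℕ → X → X) (L : ℕ → ℝ) (hL0 : ∀ k, 0 ≤ L k) (hf0 : ∀ k, f k 0 = 0)
    (hLip : ∀ (k : ℕ) (u v : X), ‖f k u - f k v‖ ≤ L k * ‖u - v‖)
    -- `α = sup_{m>n} (1/a_{m,n}) ∑_{k=n}^{m-1} a_{m,k+1} a_{k,n} Lip(f k) < ∞`
    (α : ℝ)
    (hα : IsLUB {r : ℝ | ∃ m n : ℕ, n < m ∧
      r = (∑ k ∈ Finset.Ico n m, a m (k + 1) * (a k n * L k)) / a m n} α)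
    -- `β = sup_n ∑_{k=n}^{∞} b_{k+1,n} a_{k,n} Lip(f k) < ∞`
    (β : ℝ)
    -- `2α + max {2β, √β} < 1`
    (hcond : 2 * α + max (2 * β) (Real.sqrt β) < 1)
    (φ : ∀ n : ℕ, LinearMap.range (P n : X →ₗ[ℝ] X) → LinearMap.ker (P n : X →ₗ[ℝ] X))
    (hφ : ((∀ n, φ n 0 = 0) ∧
      ∀ (n : ℕ) (ξ ξ' : LinearMap.range (P n : X →ₗ[ℝ] X)),
        ‖(φ n ξ : X) - (φ n ξ' : X)‖ ≤ ‖(ξ : X) - (ξ' : X)‖))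
    (n : ℕ) (x : ∀ m : ℕ, LinearMap.range (P n : X →ₗ[ℝ] X) → LinearMap.range (P m : X →ₗ[ℝ] X))
    (hx : ((∀ m : ℕ, n ≤ m → x m 0 = 0) ∧
      (∃ C : ℝ, ∀ m : ℕ, n ≤ m → ∀ ξ : LinearMap.range (P n : X →ₗ[ℝ] X),
        ‖(x m ξ : X)‖ ≤ C * (a m n * ‖(ξ : X)‖)) ∧
      (∀ m : ℕ, n ≤ m → ∀ ξ : LinearMap.range (P n : X →ₗ[ℝ] X),
        (x m ξ : X) = calA A m n (ξ : X) +
          ∑ k ∈ Finset.Ico n m,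
            calA A m (k + 1) (P (k + 1) (f k ((x k ξ : X) + (φ k (x k ξ) : X)))))))
    :
    ∀ m : ℕ, n ≤ m → ∀ ξ : LinearMap.range (P n : X →ₗ[ℝ] X),
      ‖(x m ξ : X)‖ ≤ 1 / (1 - 2 * α) * (a m n * ‖(ξ : X)‖) := by
  obtain ⟨-, -, hrec⟩ := hx
  intro m hm ξ
  have h2α : 2 * α < 1 := by
    linarith [(Real.sqrt_nonneg β).trans (le_max_right (2 * β) (Real.sqrt β))]
  have hφle : ∀ k (u : LinearMap.range (P k : X →ₗ[ℝ] X)), ‖(φ k u : X)‖ ≤ ‖(u : X)‖ :=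
    fun k u => by
      simpa using norm_le_mul_norm_of_lipschitz (K := 1) (hφ.1 k)
        (fun u v => by simpa using hφ.2 k u v) u
  have hweights : ∀ m, n ≤ m → ∑ k ∈ Ico n m, 2 * (a m (k + 1) * L k) * (a k n * ‖(ξ : X)‖) ≤
      2 * α * (a m n * ‖(ξ : X)‖) := fun m hm => by
    calc _ = 2 * ‖(ξ : X)‖ * ∑ k ∈ Ico n m, a m (k + 1) * (a k n * L k) := by
          rw [mul_sum]; exact sum_congr rfl fun k _ => by ring
      _ ≤ 2 * ‖(ξ : X)‖ * (α * a m n) := by gcongr; exact sum_le_mul_of_isLUB ha hL0 hα hm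
      _ = _ := by ring
  have hvoc : ∀ m, n ≤ m → ‖(x m ξ : X)‖ ≤ a m n * ‖(ξ : X)‖ +
      ∑ k ∈ Ico n m, 2 * (a m (k + 1) * L k) * ‖(x k ξ : X)‖ := fun m hm => by
    rw [hrec m hm ξ]
    refine (norm_add_le _ _).trans (add_le_add ?_ ((norm_sum_le _ _).trans (sum_le_sum ?_)))
    · exact norm_apply_le_of_mem_range_of_idempotent (hproj n) (hD1 m n hm) ξ.2
    · intro k hk
      exact norm_apply_lipschitz_add_le (T := (calA A m (k + 1)).comp (P (k + 1)))
        (hD1 m (k + 1) (mem_Ico.mp hk).2) (hL0 k) (hf0 k) (hLip k) (hφle k (x k ξ))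
  have key := le_div_one_sub_of_le_add_sum h2α
    (fun m k hk => mul_nonneg two_pos.le
      (mul_nonneg (ha m (k + 1) (mem_Ico.mp hk).2).le (hL0 k))) hweights hvoc m hm
  rwa [div_eq_inv_mul, ← one_div] at key

/-- Estimate `‖x^φ‖_n ≤ 1/(1-2α)` for the unique sequence `x^φ ∈ ℬ_n`. -/
theorem norm_xphi_le
    {X : Type*} [NormedAddCommGroup X] [NormedSpace ℝ X] [CompleteSpace X]
    (A P : ℕ → X →L[ℝ] X) (B : ℕ → ℕ → X →L[ℝ] X) (a b : ℕ → ℕ → ℝ)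
    -- the bounds are positive
    (ha : ∀ m n : ℕ, n ≤ m → 0 < a m n) (hb : ∀ m n : ℕ, n ≤ m → 0 < b m n)
    -- the `P n` are bounded projections
    (hproj : ∀ n, (P n).comp (P n) = P n)
    -- (S1) : `P m ∘ 𝒜_{m,n} = 𝒜_{m,n} ∘ P n`
    (hS1 : ∀ m n : ℕ, n ≤ m → (P m).comp (calA A m n) = (calA A m n).comp (P n))
    -- (S2)/(S3) : `B m n` is the operator `(𝒜_{m,n}|_{F n})⁻¹ ∘ Q m`, where `Q m = Id - P m`;
    -- its existence encodes that `𝒜_{m,n}` maps `F n = ker (P n)` bijectively onto `F m`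
    (hB1 : ∀ m n : ℕ, n ≤ m → ∀ x : X, calA A m n (B m n x) = x - P m x)
    (hB2 : ∀ m n : ℕ, n ≤ m → ∀ x : X, B m n (calA A m n x) = x - P n x)
    (hBF : ∀ m n : ℕ, n ≤ m → ∀ x : X, P n (B m n x) = 0)
    -- (D1) : `‖𝒜_{m,n} P n‖ ≤ a m n`
    (hD1 : ∀ m n : ℕ, n ≤ m → ‖(calA A m n).comp (P n)‖ ≤ a m n)
    -- (D2) : `‖(𝒜_{m,n}|_{F n})⁻¹ Q m‖ ≤ b m n`
    (hD2 : ∀ m n : ℕ, n ≤ m → ‖B m n‖ ≤ b m n)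
    -- the perturbations `f k` vanish at `0` and are Lipschitz with constant `L k`
    (f : ℕ → X → X) (L : ℕ → ℝ) (hL0 : ∀ k, 0 ≤ L k) (hf0 : ∀ k, f k 0 = 0)
    (hLip : ∀ (k : ℕ) (u v : X), ‖f k u - f k v‖ ≤ L k * ‖u - v‖)
    -- `α = sup_{m>n} (1/a_{m,n}) ∑_{k=n}^{m-1} a_{m,k+1} a_{k,n} Lip(f k) < ∞`
    (α : ℝ)
    (hα : IsLUB {r : ℝ | ∃ m n : ℕ, n < m ∧
      r = (∑ k ∈ Finset.Ico n m, a m (k + 1) * (a k n * L k)) / a m n} α)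
    -- `β = sup_n ∑_{k=n}^{∞} b_{k+1,n} a_{k,n} Lip(f k) < ∞`
    (β : ℝ)
    (hsum : ∀ n : ℕ, Summable fun j : ℕ => b (n + j + 1) n * (a (n + j) n * L (n + j)))
    (hβ : IsLUB {r : ℝ | ∃ n : ℕ,
      r = ∑' j : ℕ, b (n + j + 1) n * (a (n + j) n * L (n + j))} β)
    -- `2α + max {2β, √β} < 1`
    (hcond : 2 * α + max (2 * β) (Real.sqrt β) < 1)
    (φ : ∀ n : ℕ, LinearMap.range (P n : X →ₗ[ℝ] X) → LinearMap.ker (P n : X →ₗ[ℝ] X))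
    (hφ : ((∀ n, φ n 0 = 0) ∧
      ∀ (n : ℕ) (ξ ξ' : LinearMap.range (P n : X →ₗ[ℝ] X)),
        ‖(φ n ξ : X) - (φ n ξ' : X)‖ ≤ ‖(ξ : X) - (ξ' : X)‖))
    (n : ℕ) (x : ∀ m : ℕ, LinearMap.range (P n : X →ₗ[ℝ] X) → LinearMap.range (P m : X →ₗ[ℝ] X))
    (hx : ((∀ m : ℕ, n ≤ m → x m 0 = 0) ∧
      (∃ C : ℝ, ∀ m : ℕ, n ≤ m → ∀ ξ : LinearMap.range (P n : X →ₗ[ℝ] X),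
        ‖(x m ξ : X)‖ ≤ C * (a m n * ‖(ξ : X)‖)) ∧
      (∀ m : ℕ, n ≤ m → ∀ ξ : LinearMap.range (P n : X →ₗ[ℝ] X),
        (x m ξ : X) = calA A m n (ξ : X) +
          ∑ k ∈ Finset.Ico n m,
            calA A m (k + 1) (P (k + 1) (f k ((x k ξ : X) + (φ k (x k ξ) : X)))))))
    :
    ∀ m : ℕ, n ≤ m → ∀ ξ : LinearMap.range (P n : X →ₗ[ℝ] X),
      ‖(x m ξ : X)‖ ≤ 1 / (1 - 2 * α) * (a m n * ‖(ξ : X)‖) :=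
  norm_xphi_le_general A P a ha hproj hD1 f L hL0 hf0 hLip α hα β hcond φ hφ n x hx
end
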